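/- arXiv:1511.02732 — 2 statements merged into one kernel-verified Lean document; each statement's English description precedes it below -/
import Mathlib

section
/- There exists a matrix A in ℂ^{n×n}_∗ (n ≥ 2) that is nilpotent of index 2 in this algebra (A ∗ A = 0) but has nonzero eigenvalues: taking A with entries α_11 = 1, α_1n = −i, α_n1 = i, α_nn = −1 and all other entries 0, one has A ∗ A = 0 while det(tI − A) = t^{n−2}(t² − 2), so ±√2 are eigenvalues of A. -/
open Polynomial

/-- `A′`: the matrix obtained from `A` by negating its `(1, n)` entry
(indices `0` and `n-1` in 0-based notation). -/
def primeMat {𝔽 : Type*} [RCLike 𝔽] {n : ℕ} (A : Matrix (Fin n) (Fin n) 𝔽) :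
    Matrix (Fin n) (Fin n) 𝔽 :=
  fun i j => if i.val = 0 ∧ j.val = n - 1 then -A i j else A i j

/-- The product of the algebra `𝔽^{n×n}_∗`: `A ∗ B = (A′B′)′`. -/
def starMul {𝔽 : Type*} [RCLike 𝔽] {n : ℕ} (A B : Matrix (Fin n) (Fin n) 𝔽) :
    Matrix (Fin n) (Fin n) 𝔽 :=
  primeMat (primeMat A * primeMat B)

/-- The specific test matrix. -/
def testMat (n : ℕ) : Matrix (Fin n) (Fin n) ℂ := fun i j =>
  if i.val = 0 ∧ j.val = 0 then 1
  else if i.val = 0 ∧ j.val = n - 1 then -Complex.I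
  else if i.val = n - 1 ∧ j.val = 0 then Complex.I
  else if i.val = n - 1 ∧ j.val = n - 1 then -1
  else 0

/-- `(testMat n)′`. -/
def qMat (n : ℕ) : Matrix (Fin n) (Fin n) ℂ := fun i j =>
  if i.val = 0 ∧ j.val = 0 then 1
  else if i.val = 0 ∧ j.val = n - 1 then Complex.I
  else if i.val = n - 1 ∧ j.val = 0 then Complex.I
  else if i.val = n - 1 ∧ j.val = n - 1 then -1
  else 0

set_option linter.unnecessarySeqFocus false

lemma primeMat_testMat {n : ℕ} (hn : 2 ≤ n) : primeMat (testMat n) = qMat n := by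
  funext i j
  simp only [primeMat, testMat, qMat]
  split_ifs <;> (try rfl) <;> (try ring1) <;> (exfalso; omega)

lemma primeMat_zero {n : ℕ} : primeMat (0 : Matrix (Fin n) (Fin n) ℂ) = 0 := by
  funext i j
  simp [primeMat]

lemma qMat_sq {n : ℕ} (hn : 2 ≤ n) : qMat n * qMat n = 0 := by
  have hne : (⟨0, by omega⟩ : Fin n) ≠ ⟨n - 1, by omega⟩ := by
    simp only [ne_eq, Fin.mk.injEq]; omega
  funext i j
  rw [Matrix.mul_apply]
  have key : ∀ k : Fin n, k ∉ ({⟨0, by omega⟩, ⟨n - 1, by omega⟩} : Finset (Fin n)) →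
      qMat n i k * qMat n k j = 0 := by
    intro k hk
    simp only [Finset.mem_insert, Finset.mem_singleton, Fin.ext_iff] at hk
    push_neg at hk
    have h1 : (k : ℕ) ≠ 0 := hk.1
    have h2 : (k : ℕ) ≠ n - 1 := hk.2
    have : qMat n i k = 0 := by
      simp only [qMat]
      split_ifs <;> (try rfl) <;> (exfalso; omega)
    rw [this, zero_mul]
  rw [← Finset.sum_subset (Finset.subset_univ _) (fun k _ hk => key k hk),
    Finset.sum_pair hne]
  have e0 : ((⟨0, by omega⟩ : Fin n) : ℕ) = 0 := rfl
  have e1 : ((⟨n - 1, by omega⟩ : Fin n) : ℕ) = n - 1 := rfl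
  have w1 : ¬ ((0 : ℕ) = n - 1) := by omega
  have w2 : ¬ ((n - 1 : ℕ) = 0) := by omega
  by_cases hi0 : (i : ℕ) = 0 <;> by_cases hi1 : (i : ℕ) = n - 1 <;>
    by_cases hj0 : (j : ℕ) = 0 <;> by_cases hj1 : (j : ℕ) = n - 1 <;>
    (try (exfalso; omega)) <;>
    simp [qMat, e0, e1, hi0, hi1, hj0, hj1, w1, w2, Complex.I_mul_I]

lemma starMul_testMat {n : ℕ} (hn : 2 ≤ n) : starMul (testMat n) (testMat n) = 0 := by
  rw [starMul, primeMat_testMat hn, qMat_sq hn, primeMat_zero]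

/-- Reindexing equivalence putting positions `0` and `n-1` first. -/
def auxEquiv (n : ℕ) (hn : 2 ≤ n) : (Fin 2 ⊕ Fin (n - 2)) ≃ Fin n :=
  (finSumFinEquiv.trans (finCongr (by omega))).trans
    (Equiv.swap ⟨1, by omega⟩ ⟨n - 1, by omega⟩)

lemma auxEquiv_inl0 {n : ℕ} (hn : 2 ≤ n) :
    ((auxEquiv n hn (Sum.inl 0) : Fin n) : ℕ) = 0 := by
  simp only [auxEquiv, Equiv.trans_apply, finSumFinEquiv_apply_left, finCongr_apply]
  rw [Equiv.swap_apply_of_ne_of_ne]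
  · rfl
  · rw [Ne, Fin.ext_iff]; simp
  · rw [Ne, Fin.ext_iff]; simp; omega

lemma auxEquiv_inl1 {n : ℕ} (hn : 2 ≤ n) :
    ((auxEquiv n hn (Sum.inl 1) : Fin n) : ℕ) = n - 1 := by
  simp only [auxEquiv, Equiv.trans_apply, finSumFinEquiv_apply_left, finCongr_apply]
  have : (Fin.cast (by omega : 2 + (n - 2) = n) (Fin.castAdd (n - 2) 1)) = (⟨1, by omega⟩ : Fin n) := by
    rw [Fin.ext_iff]; rfl
  rw [this, Equiv.swap_apply_left]

lemma auxEquiv_inr {n : ℕ} (hn : 2 ≤ n) (k : Fin (n - 2)) :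
    ((auxEquiv n hn (Sum.inr k) : Fin n) : ℕ) ≠ 0 ∧
      ((auxEquiv n hn (Sum.inr k) : Fin n) : ℕ) ≠ n - 1 := by
  have hk : (k : ℕ) < n - 2 := k.isLt
  simp only [auxEquiv, Equiv.trans_apply, finSumFinEquiv_apply_right, finCongr_apply]
  rw [Equiv.swap_apply_def]
  have hv : ((Fin.cast (by omega : 2 + (n - 2) = n) (Fin.natAdd 2 k)) : ℕ) = 2 + (k : ℕ) := rfl
  split_ifs with h1 h2
  · exfalso
    have h1' : 2 + (k : ℕ) = 1 := hv.symm.trans (congrArg Fin.val h1)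
    omega
  · have h2' : 2 + (k : ℕ) = n - 1 := hv.symm.trans (congrArg Fin.val h2)
    exact ⟨Nat.one_ne_zero, show (1 : ℕ) ≠ n - 1 by omega⟩
  · have h2' : 2 + (k : ℕ) ≠ n - 1 := fun h => h2 (Fin.ext (hv.trans h))
    exact ⟨show 2 + (k : ℕ) ≠ 0 by omega, h2'⟩

/-- The 2×2 corner block of the characteristic matrix. -/
noncomputable def bMat : Matrix (Fin 2) (Fin 2) (Polynomial ℂ) :=
  !![X - C 1, C Complex.I; -C Complex.I, X + C 1]

lemma submatrix_charmatrix {n : ℕ} (hn : 2 ≤ n) :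
    (Matrix.charmatrix (testMat n)).submatrix (auxEquiv n hn) (auxEquiv n hn) =
      Matrix.fromBlocks bMat 0 0
        (Matrix.diagonal fun _ : Fin (n - 2) => (X : Polynomial ℂ)) := by
  have w2 : ¬ ((n - 1 : ℕ) = 0) := by omega
  have w1 : ¬ ((0 : ℕ) = n - 1) := by omega
  refine Matrix.ext fun x y => ?_
  rcases x with a | k <;> rcases y with b | l
  · fin_cases a <;> fin_cases b <;> simp only [Fin.zero_eta, Fin.mk_one] <;> rw [Matrix.submatrix_apply]
    · rw [Matrix.charmatrix_apply_eq]
      simp [testMat, bMat, auxEquiv_inl0 hn]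
    · rw [Matrix.charmatrix_apply_ne _ _ _
        (by rw [Ne, Fin.ext_iff, auxEquiv_inl0 hn, auxEquiv_inl1 hn]; omega)]
      simp [testMat, bMat, auxEquiv_inl0 hn, auxEquiv_inl1 hn, w1, w2, map_neg]
    · rw [Matrix.charmatrix_apply_ne _ _ _
        (by rw [Ne, Fin.ext_iff, auxEquiv_inl0 hn, auxEquiv_inl1 hn]; omega)]
      simp [testMat, bMat, auxEquiv_inl0 hn, auxEquiv_inl1 hn, w1, w2]
    · rw [Matrix.charmatrix_apply_eq]
      simp [testMat, bMat, auxEquiv_inl1 hn, w1, w2]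
      try ring
  · obtain ⟨m1, m2⟩ := auxEquiv_inr hn l
    fin_cases a <;> simp only [Fin.zero_eta, Fin.mk_one] <;> rw [Matrix.submatrix_apply] <;>
      [rw [Matrix.charmatrix_apply_ne _ _ _
          (by rw [Ne, Fin.ext_iff, auxEquiv_inl0 hn]; omega)];
       rw [Matrix.charmatrix_apply_ne _ _ _
          (by rw [Ne, Fin.ext_iff, auxEquiv_inl1 hn]; omega)]] <;>
      simp [testMat, auxEquiv_inl0 hn, auxEquiv_inl1 hn, m1, m2, w1, w2]
  · obtain ⟨m1, m2⟩ := auxEquiv_inr hn k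
    fin_cases b <;> simp only [Fin.zero_eta, Fin.mk_one] <;> rw [Matrix.submatrix_apply] <;>
      [rw [Matrix.charmatrix_apply_ne _ _ _
          (by rw [Ne, Fin.ext_iff, auxEquiv_inl0 hn]; omega)];
       rw [Matrix.charmatrix_apply_ne _ _ _
          (by rw [Ne, Fin.ext_iff, auxEquiv_inl1 hn]; omega)]] <;>
      simp [testMat, auxEquiv_inl0 hn, auxEquiv_inl1 hn, m1, m2, w1, w2]
  · obtain ⟨m1, m2⟩ := auxEquiv_inr hn k
    rw [Matrix.submatrix_apply]
    by_cases hkl : k = l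
    · subst hkl
      rw [Matrix.charmatrix_apply_eq]
      simp [testMat, m1, m2]
    · rw [Matrix.charmatrix_apply_ne _ _ _
        (fun h => hkl (Sum.inr.inj ((auxEquiv n hn).injective h)))]
      simp [testMat, m1, m2, Matrix.diagonal_apply_ne _ hkl]

lemma det_bMat : bMat.det = X ^ 2 - C 2 := by
  rw [bMat, Matrix.det_fin_two_of]
  have h : (C Complex.I : Polynomial ℂ) * C Complex.I = -1 := by
    rw [← map_mul, Complex.I_mul_I, map_neg, map_one]
  have h1 : (C (1 : ℂ) : Polynomial ℂ) = 1 := map_one C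
  have h2 : (C (2 : ℂ) : Polynomial ℂ) = 2 := by
    rw [show (2 : ℂ) = 1 + 1 by norm_num, map_add, h1]; ring
  rw [h1, h2]
  linear_combination h

lemma charpoly_testMat {n : ℕ} (hn : 2 ≤ n) :
    (testMat n).charpoly = X ^ (n - 2) * (X ^ 2 - C 2) := by
  have := Matrix.det_submatrix_equiv_self (auxEquiv n hn) (Matrix.charmatrix (testMat n))
  rw [Matrix.charpoly, ← this, submatrix_charmatrix hn,
    Matrix.det_fromBlocks_zero₂₁, det_bMat, Matrix.det_diagonal]
  simp [Finset.prod_const, mul_comm]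

/-- In `ℂ^{n×n}_∗` (`n ≥ 2`) there is a matrix nilpotent of index 2 whose
eigenvalues include `±√2`: the matrix with entries `α₁₁ = 1`, `α₁ₙ = -i`,
`αₙ₁ = i`, `αₙₙ = -1`, and zeros elsewhere, satisfies `A ∗ A = 0` while
`det(tI - A) = t^{n-2}(t² - 2)`. -/
theorem star_nilpotent_with_nonzero_eigenvalues {n : ℕ} (hn : 2 ≤ n) :
    ∃ A : Matrix (Fin n) (Fin n) ℂ,
      (A = fun i j =>
        if i.val = 0 ∧ j.val = 0 then 1
        else if i.val = 0 ∧ j.val = n - 1 then -Complex.I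
        else if i.val = n - 1 ∧ j.val = 0 then Complex.I
        else if i.val = n - 1 ∧ j.val = n - 1 then -1
        else 0) ∧
      starMul A A = 0 ∧
      Matrix.charpoly A = X ^ (n - 2) * (X ^ 2 - C 2) ∧
      (Matrix.charpoly A).IsRoot (Real.sqrt 2 : ℂ) ∧
      (Matrix.charpoly A).IsRoot (-(Real.sqrt 2 : ℂ)) := by
  have h2 : ((Real.sqrt 2 : ℝ) : ℂ) ^ 2 = 2 := by
    rw [← Complex.ofReal_pow, Real.sq_sqrt (by norm_num)]
    norm_num
  refine ⟨testMat n, rfl, starMul_testMat hn, charpoly_testMat hn, ?_, ?_⟩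
  · simp [Polynomial.IsRoot, charpoly_testMat hn, h2]
  · simp [Polynomial.IsRoot, charpoly_testMat hn, neg_sq, h2]
end

section
/- There exists an entrywise nonnegative nonzero matrix A in 𝔽^{n×n}_∗ (n ≥ 2) whose square in this algebra is a nonzero entrywise nonpositive matrix: taking A with α_1n = α_n1 = 1 and all other entries 0, the square A ∗ A has all entries zero except the (1,1) and (n,n) entries which equal −1. -/
open Polynomial

/-!
Priming the anti-diagonal corner matrix `A = E₁ₙ + Eₙ₁` turns it into the rotation
`J = Eₙ₁ - E₁ₙ` of the plane spanned by the first and last basis vectors, and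
`J² = -(E₁₁ + Eₙₙ)`. This square has a zero `(1, n)` entry, so priming it again changes nothing:
`A ∗ A = -(E₁₁ + Eₙₙ)`.
-/

namespace Matrix

variable {ι α : Type*} [Fintype ι] [DecidableEq ι] [Ring α]

theorem single_sub_single_mul_self {i j : ι} (hij : i ≠ j) :
    (single j i (1 : α) - single i j 1) * (single j i 1 - single i j 1) =
      -(single i i 1 + single j j 1) := by
  simp only [sub_mul, mul_sub, single_mul_single_same, single_mul_single_of_ne _ _ _ _ hij,
    single_mul_single_of_ne _ _ _ _ hij.symm, mul_one]
  abel

end Matrix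

section

open Matrix

variable {𝔽 : Type*} [RCLike 𝔽]

def antiCorner (n : ℕ) : Matrix (Fin n) (Fin n) 𝔽 :=
  fun i j => if (i.val = 0 ∧ j.val = n - 1) ∨ (i.val = n - 1 ∧ j.val = 0) then 1 else 0

theorem primeMat_eq_self_of_apply_eq_zero {n : ℕ} {A : Matrix (Fin n) (Fin n) 𝔽}
    (hA : ∀ i j : Fin n, i.val = 0 → j.val = n - 1 → A i j = 0) : primeMat A = A := by
  funext i j
  by_cases h : i.val = 0 ∧ j.val = n - 1
  · simp [primeMat, h, hA i j h.1 h.2]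
  · simp [primeMat, h]

theorem primeMat_antiCorner (m : ℕ) :
    primeMat (antiCorner (m + 2) : Matrix _ _ 𝔽) =
      single (Fin.last _) 0 1 - single 0 (Fin.last _) 1 := by
  funext i j
  simp only [primeMat, antiCorner, Matrix.sub_apply, single_apply, Fin.ext_iff, Fin.val_last,
    Fin.val_zero]
  split_ifs <;> first | omega | norm_num

theorem starMul_antiCorner_self (m : ℕ) :
    starMul (antiCorner (m + 2)) (antiCorner (m + 2)) = fun i j : Fin (m + 2) =>
      if (i.val = 0 ∧ j.val = 0) ∨ (i.val = m + 2 - 1 ∧ j.val = m + 2 - 1) then (-1 : 𝔽) else 0 := by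
  rw [starMul, primeMat_antiCorner,
    single_sub_single_mul_self (Fin.last_pos.ne : (0 : Fin (m + 2)) ≠ _),
    primeMat_eq_self_of_apply_eq_zero]
  · funext i j
    simp only [Matrix.neg_apply, Matrix.add_apply, single_apply, Fin.ext_iff, Fin.val_last,
      Fin.val_zero]
    split_ifs <;> first | omega | norm_num
  · intro i j hi hj
    simp [Fin.ext_iff, hi, hj]

end

/-- In `𝔽^{n×n}_∗` (`n ≥ 2`) there is a positive matrix (nonzero, with all
entries nonnegative reals) whose square in this algebra is a negative matrix
(nonzero, with all entries nonpositive reals): the matrix with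
`α₁ₙ = αₙ₁ = 1` and zeros elsewhere; its square has all entries zero except
the `(1,1)` and `(n,n)` entries, which equal `-1`. -/
theorem star_positive_with_negative_square {𝔽 : Type*} [RCLike 𝔽] {n : ℕ}
    (hn : 2 ≤ n) :
    ∃ A : Matrix (Fin n) (Fin n) 𝔽,
      (A = fun i j =>
        if (i.val = 0 ∧ j.val = n - 1) ∨ (i.val = n - 1 ∧ j.val = 0) then 1 else 0) ∧
      A ≠ 0 ∧ (∀ i j, ∃ x : ℝ, 0 ≤ x ∧ A i j = (x : 𝔽)) ∧
      (starMul A A = fun i j =>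
        if (i.val = 0 ∧ j.val = 0) ∨ (i.val = n - 1 ∧ j.val = n - 1) then -1 else 0) ∧
      starMul A A ≠ 0 ∧ (∀ i j, ∃ x : ℝ, x ≤ 0 ∧ starMul A A i j = (x : 𝔽)) := by
  obtain ⟨m, rfl⟩ : ∃ m, n = m + 2 := ⟨n - 2, by omega⟩
  refine ⟨antiCorner (m + 2), rfl, fun h => ?_, fun i j => ?_, starMul_antiCorner_self m, ?_,
    fun i j => ?_⟩
  · simpa [antiCorner] using congrFun₂ h 0 (Fin.last _)
  · unfold antiCorner
    split_ifs
    exacts [⟨1, zero_le_one, by simp⟩, ⟨0, le_rfl, by simp⟩]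
  · rw [starMul_antiCorner_self]
    exact fun h => by simpa using congrFun₂ h 0 0
  · rw [starMul_antiCorner_self]
    dsimp only
    split_ifs
    exacts [⟨-1, by norm_num, by simp⟩, ⟨0, le_rfl, by simp⟩]
end
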